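/- For every integer d ≥ 4, let M : ℤ^{W_d} → ℤ⁴ be the group homomorphism sending v to (∑_{x∈W_d} v_x, ∑_{x∈W_d} v_x·r_x, ∑_{x∈W_d} v_x·γ_x, ∑_{x∈W_d} v_x·δ_x), where x = (r_x,γ_x,δ_x). Then the subgroup of ℤ^{W_d} generated by the vectors e_a + e_b − e_c − e_{d'} over all a,b,c,d' ∈ W_d with a + b = c + d' in ℤ³ equals ker M, and ker M is a free abelian group of rank (#W_d) − 4. (In particular the lattice L_η generated by the lattice points of the suitable 2-binomials is saturated of rank μ(T_d) − 4.) -/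

import Mathlib

/-!
The moment map `M` sends `e_x` to `(1, x)`, so every binomial `e_a + e_b - e_c - e_e` with
`a + b = c + e` lies in its kernel. The unit vectors at `(0,0,0)`, `(1,0,0)`, `(1,1,0)`, `(1,0,1)`
have moments forming a basis of `ℤ⁴`, which gives a section `σ` of `M`. Modulo the binomial
lattice `L`, a relation `a + b = c + e` expresses `e_a` through `e_b, e_c, e_e`; descending
through `W_d` layer by layer (`r = 1`, then `r = 2` first in `δ` and then in `γ`, then `r = 3`)
shows that every `e_x` lies in `L + im σ`. Hence `L = ker M`, `M` is onto, and rank–nullity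
over `ℤ` gives that `ker M` is free of rank `#W_d - 4`.
-/

/-- `W_d`: triples `(r,γ,δ)` encoding the degree-`d` monomials invariant under the
action of the diagonal matrix `M(1,e,e²,e³)`. -/
def Wset (d : ℕ) : Set (ℤ × ℤ × ℤ) :=
  {x | 0 ≤ x.1 ∧ x.1 ≤ 3 ∧ 0 ≤ x.2.1 ∧ 0 ≤ x.2.2 ∧
    0 ≤ x.2.2 + 2 * x.2.1 + (1 - x.1) * (d : ℤ) ∧ 2 * x.2.2 + 3 * x.2.1 ≤ x.1 * (d : ℤ)}

open Finsupp Module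

section Binomial

variable {S A : Type*} [AddCommGroup A]

noncomputable def binomialLattice (φ : S → A) : AddSubgroup (S →₀ ℤ) :=
  AddSubgroup.closure {v | ∃ a b c e : S, φ a + φ b = φ c + φ e ∧
    v = single a 1 + single b 1 - single c 1 - single e 1}

noncomputable def moment (φ : S → A) : (S →₀ ℤ) →+ ℤ × A :=
  liftAddHom fun x => zmultiplesHom _ (1, φ x)

@[simp]
lemma moment_single (φ : S → A) (x : S) (n : ℤ) : moment φ (single x n) = n • (1, φ x) :=
  liftAddHom_apply_single _ _ _

lemma binomialLattice_le_ker_moment (φ : S → A) : binomialLattice φ ≤ (moment φ).ker := by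
  rw [binomialLattice, AddSubgroup.closure_le]
  rintro v ⟨a, b, c, e, h, rfl⟩
  simp only [SetLike.mem_coe, AddMonoidHom.mem_ker, map_sub, map_add, moment_single, one_smul]
  ext
  · simp
  · simp [h]

lemma single_mem_of_add_eq {φ : S → A} {K : AddSubgroup (S →₀ ℤ)} (hK : binomialLattice φ ≤ K)
    {a b c e : S} (h : φ a + φ b = φ c + φ e) (hb : single b 1 ∈ K) (hc : single c 1 ∈ K)
    (he : single e 1 ∈ K) : single a 1 ∈ K := by
  have hgen : single a 1 + single b 1 - single c 1 - single e 1 ∈ K :=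
    hK (AddSubgroup.subset_closure ⟨a, b, c, e, h, rfl⟩)
  convert add_mem (add_mem (sub_mem hgen hb) hc) he using 1
  abel

lemma AddSubgroup.eq_top_of_forall_single_mem {K : AddSubgroup (S →₀ ℤ)}
    (h : ∀ x, single x 1 ∈ K) : K = ⊤ := by
  refine (AddSubgroup.eq_top_iff' K).mpr fun v => ?_
  induction v using Finsupp.induction_linear with
  | zero => exact K.zero_mem
  | add f g hf hg => exact K.add_mem hf hg
  | single x n => simpa using K.zsmul_mem (h x) n

end Binomial

lemma AddMonoidHom.ker_eq_of_sup_range_eq_top {G H : Type*} [AddCommGroup G] [AddGroup H]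
    (f : G →+ H) (s : H →+ G) (hs : ∀ q, f (s q) = q) {L : AddSubgroup G} (hL : L ≤ f.ker)
    (htop : L ⊔ s.range = ⊤) : f.ker = L := by
  refine le_antisymm (fun v hv => ?_) hL
  obtain ⟨l, hl, _, ⟨q, rfl⟩, rfl⟩ := AddSubgroup.mem_sup.mp (htop ▸ AddSubgroup.mem_top v)
  have hq : q = 0 := by simpa [AddMonoidHom.mem_ker.mp (hL hl), hs] using hv
  simpa [hq] using hl

lemma AddMonoidHom.nonempty_basis_ker {G A : Type*} [AddCommGroup G] [AddCommGroup A]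
    [Module.Free ℤ G] [Module.Finite ℤ G] (f : G →+ A) (hf : Function.Surjective f) :
    Nonempty (Basis (Fin (finrank ℤ G - finrank ℤ A)) ℤ f.ker) := by
  have h := (LinearMap.ker f.toIntLinearMap).finrank_quotient_add_finrank
  rw [(f.toIntLinearMap.quotKerEquivOfSurjective hf).finrank_eq] at h
  exact ⟨finBasisOfFinrankEq ℤ (LinearMap.ker f.toIntLinearMap) (by omega)⟩

namespace Wset

variable {d : ℕ}

lemma mem_iff {r γ δ : ℤ} : (r, γ, δ) ∈ Wset d ↔ 0 ≤ r ∧ r ≤ 3 ∧ 0 ≤ γ ∧ 0 ≤ δ ∧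
    0 ≤ δ + 2 * γ + (1 - r) * d ∧ 2 * δ + 3 * γ ≤ r * d :=
  Iff.rfl

lemma finite (d : ℕ) : (Wset d).Finite := by
  refine (Set.finite_Icc ((0 : ℤ), (0 : ℤ), (0 : ℤ)) (3, d, 2 * d)).subset ?_
  rintro ⟨r, γ, δ⟩ hx
  obtain ⟨h0, h3, hγ, hδ, -, hw⟩ := mem_iff.mp hx
  have hr : r * d ≤ 3 * d := by nlinarith
  simp only [Set.mem_Icc, Prod.mk_le_mk]
  omega

/-- Four points of `W_d` whose moments `(1, x)` form a basis of `ℤ⁴`. -/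
def frame : Set (ℤ × ℤ × ℤ) := {(0, 0, 0), (1, 0, 0), (1, 1, 0), (1, 0, 1)}

def unitsIn (K : AddSubgroup (Wset d →₀ ℤ)) : Set (ℤ × ℤ × ℤ) :=
  {x | ∃ hx : x ∈ Wset d, single ⟨x, hx⟩ 1 ∈ K}

section Reduction

variable {K : AddSubgroup (Wset d →₀ ℤ)}

lemma mem_unitsIn_of_add_eq (hK : binomialLattice (Subtype.val : Wset d → ℤ × ℤ × ℤ) ≤ K)
    {a b c e : ℤ × ℤ × ℤ} (ha : a ∈ Wset d) (h : a + b = c + e) (hb : b ∈ unitsIn K)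
    (hc : c ∈ unitsIn K) (he : e ∈ unitsIn K) : a ∈ unitsIn K := by
  obtain ⟨hb, hb'⟩ := hb
  obtain ⟨hc, hc'⟩ := hc
  obtain ⟨he, he'⟩ := he
  exact ⟨ha, single_mem_of_add_eq (a := ⟨a, ha⟩) (b := ⟨b, hb⟩) (c := ⟨c, hc⟩) (e := ⟨e, he⟩)
    hK h hb' hc' he'⟩

lemma one_mem_unitsIn (hK : binomialLattice (Subtype.val : Wset d → ℤ × ℤ × ℤ) ≤ K)
    (hF : frame ⊆ unitsIn K) :
    ∀ γ δ : ℕ, 3 * γ + 2 * δ ≤ d → ((1 : ℤ), (γ : ℤ), (δ : ℤ)) ∈ unitsIn K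
  | 0, 0, _ => hF (by simp [frame])
  | γ, δ + 1, h =>
    mem_unitsIn_of_add_eq hK (b := (1, 0, 0)) (c := (1, γ, δ)) (e := (1, 0, 1))
      (by rw [mem_iff]; omega) (by simp)
      (hF (by simp [frame])) (one_mem_unitsIn hK hF γ δ (by omega)) (hF (by simp [frame]))
  | γ + 1, 0, h =>
    mem_unitsIn_of_add_eq hK (b := (1, 0, 0)) (c := (1, γ, 0)) (e := (1, 1, 0))
      (by rw [mem_iff]; omega) (by simp)
      (hF (by simp [frame])) (by simpa using one_mem_unitsIn hK hF γ 0 (by omega))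
      (hF (by simp [frame]))

lemma two_zero_mem_unitsIn (hd : 4 ≤ d)
    (hK : binomialLattice (Subtype.val : Wset d → ℤ × ℤ × ℤ) ≤ K) (hF : frame ⊆ unitsIn K) :
    ∀ γ : ℕ, d ≤ 2 * γ → 3 * γ ≤ 2 * d → ((2 : ℤ), (γ : ℤ), (0 : ℤ)) ∈ unitsIn K
  | 0, h, _ => by omega
  | γ + 1, h, h' => by
    by_cases hγ : d ≤ 2 * γ
    · exact mem_unitsIn_of_add_eq hK (b := (1, 0, 0)) (c := (2, γ, 0)) (e := (1, 1, 0))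
        (by rw [mem_iff]; omega) (by simp) (hF (by simp [frame]))
        (two_zero_mem_unitsIn hd hK hF γ hγ (by omega)) (hF (by simp [frame]))
    by_cases h5 : d = 5
    -- `(2, 3, 0)` is not a sum of two points of `W_5` with `r = 1`
    · subst h5
      obtain rfl : γ = 2 := by omega
      have h111 : ((1 : ℤ), (1 : ℤ), (1 : ℤ)) ∈ unitsIn K := by
        simpa using one_mem_unitsIn hK hF 1 1 (by omega)
      have h222 : ((2 : ℤ), (2 : ℤ), (2 : ℤ)) ∈ unitsIn K :=
        mem_unitsIn_of_add_eq hK (b := (0, 0, 0)) (by rw [mem_iff]; omega) (by simp)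
          (hF (by simp [frame])) h111 h111
      exact mem_unitsIn_of_add_eq hK (b := (1, 0, 2)) (c := (2, 2, 2)) (e := (1, 1, 0))
        (by rw [mem_iff]; omega) (by simp) (by simpa using one_mem_unitsIn hK hF 0 2 (by omega))
        h222 (hF (by simp [frame]))
    · exact mem_unitsIn_of_add_eq hK (b := (0, 0, 0)) (c := (1, ((γ + 1) / 2 : ℕ), 0))
        (e := (1, (γ + 1 - (γ + 1) / 2 : ℕ), 0)) (by rw [mem_iff]; omega)
        (by simp; omega) (hF (by simp [frame]))
        (by simpa using one_mem_unitsIn hK hF ((γ + 1) / 2) 0 (by omega))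
        (by simpa using one_mem_unitsIn hK hF (γ + 1 - (γ + 1) / 2) 0 (by omega))

lemma two_mem_unitsIn (hd : 4 ≤ d)
    (hK : binomialLattice (Subtype.val : Wset d → ℤ × ℤ × ℤ) ≤ K) (hF : frame ⊆ unitsIn K) :
    ∀ γ δ : ℕ, d ≤ δ + 2 * γ → 2 * δ + 3 * γ ≤ 2 * d → ((2 : ℤ), (γ : ℤ), (δ : ℤ)) ∈ unitsIn K
  | γ, 0, h, h' => by simpa using two_zero_mem_unitsIn hd hK hF γ (by omega) (by omega)
  | γ, 1, h, h' => by
    by_cases hγ : 3 * γ + 3 ≤ 2 * d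
    · exact mem_unitsIn_of_add_eq hK (b := (1, 1, 0)) (c := (2, (γ + 1 : ℕ), 0)) (e := (1, 0, 1))
        (by rw [mem_iff]; omega) (by simp) (hF (by simp [frame]))
        (two_zero_mem_unitsIn hd hK hF (γ + 1) (by omega) hγ) (hF (by simp [frame]))
    · exact mem_unitsIn_of_add_eq hK (b := (1, 0, 0)) (c := (2, γ, 0)) (e := (1, 0, 1))
        (by rw [mem_iff]; omega) (by simp) (hF (by simp [frame]))
        (two_zero_mem_unitsIn hd hK hF γ (by omega) (by omega)) (hF (by simp [frame]))
  | γ, δ + 2, h, h' =>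
    mem_unitsIn_of_add_eq hK (b := (1, 1, 0)) (c := (2, (γ + 1 : ℕ), δ)) (e := (1, 0, 2))
      (by rw [mem_iff]; omega) (by simp) (hF (by simp [frame]))
      (two_mem_unitsIn hd hK hF (γ + 1) δ (by omega) (by omega))
      (by simpa using one_mem_unitsIn hK hF 0 2 (by omega))

lemma three_mem_unitsIn (hd : 4 ≤ d)
    (hK : binomialLattice (Subtype.val : Wset d → ℤ × ℤ × ℤ) ≤ K) (hF : frame ⊆ unitsIn K) :
    ((3 : ℤ), (d : ℤ), (0 : ℤ)) ∈ unitsIn K :=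
  mem_unitsIn_of_add_eq hK (b := (1, 0, 1)) (c := (2, ((d + 1) / 2 : ℕ), 0))
    (e := (2, (d - (d + 1) / 2 : ℕ), 1)) (by rw [mem_iff]; omega) (by simp; omega)
    (hF (by simp [frame]))
    (by simpa using two_mem_unitsIn hd hK hF ((d + 1) / 2) 0 (by omega) (by omega))
    (by simpa using two_mem_unitsIn hd hK hF (d - (d + 1) / 2) 1 (by omega) (by omega))

lemma subset_unitsIn (hd : 4 ≤ d)
    (hK : binomialLattice (Subtype.val : Wset d → ℤ × ℤ × ℤ) ≤ K) (hF : frame ⊆ unitsIn K) :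
    Wset d ⊆ unitsIn K := by
  rintro ⟨r, γ, δ⟩ hx
  obtain ⟨h0, h3, hγ, hδ, h, h'⟩ := mem_iff.mp hx
  lift γ to ℕ using hγ
  lift δ to ℕ using hδ
  interval_cases r
  · obtain ⟨rfl, rfl⟩ : γ = 0 ∧ δ = 0 := by omega
    exact hF (by simp [frame])
  · exact one_mem_unitsIn hK hF γ δ (by omega)
  · exact two_mem_unitsIn hd hK hF γ δ (by omega) (by omega)
  · obtain ⟨rfl, rfl⟩ : γ = d ∧ δ = 0 := by omega
    simpa using three_mem_unitsIn hd hK hF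

end Reduction

noncomputable def frameSection (hd : 3 ≤ d) : ℤ × ℤ × ℤ × ℤ →+ (Wset d →₀ ℤ) :=
  let e (x : ℤ × ℤ × ℤ) (hx : x ∈ Wset d) : Wset d →₀ ℤ := single ⟨x, hx⟩ 1
  AddMonoidHom.mk'
    (fun q => (q.1 - q.2.1) • e (0, 0, 0) (by rw [mem_iff]; omega)
      + (q.2.1 - q.2.2.1 - q.2.2.2) • e (1, 0, 0) (by rw [mem_iff]; omega)
      + q.2.2.1 • e (1, 1, 0) (by rw [mem_iff]; omega)
      + q.2.2.2 • e (1, 0, 1) (by rw [mem_iff]; omega))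
    (fun a b => by simp only [Prod.fst_add, Prod.snd_add]; match_scalars <;> ring)

lemma moment_frameSection (hd : 3 ≤ d) (q : ℤ × ℤ × ℤ × ℤ) :
    moment Subtype.val (frameSection hd q) = q := by
  obtain ⟨q₁, q₂, q₃, q₄⟩ := q
  simp only [frameSection, AddMonoidHom.mk'_apply, map_add, map_zsmul, moment_single]
  ext <;> simp <;> ring

lemma frame_subset_unitsIn (hd : 3 ≤ d) {K : AddSubgroup (Wset d →₀ ℤ)}
    (hK : (frameSection hd).range ≤ K) : frame ⊆ unitsIn K := by
  rintro x (rfl | rfl | rfl | rfl) <;> refine ⟨by rw [mem_iff]; omega, hK ?_⟩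
  · exact ⟨(1, 0, 0, 0), by simp [frameSection]⟩
  · exact ⟨(1, 1, 0, 0), by simp [frameSection]⟩
  · exact ⟨(1, 1, 1, 0), by simp [frameSection]⟩
  · exact ⟨(1, 1, 0, 1), by simp [frameSection]⟩

lemma binomialLattice_sup_range_frameSection (hd : 4 ≤ d) :
    binomialLattice Subtype.val ⊔ (frameSection (Nat.le_of_succ_le hd)).range = ⊤ := by
  refine AddSubgroup.eq_top_of_forall_single_mem fun x => ?_
  obtain ⟨_, hx⟩ := subset_unitsIn hd le_sup_left (frame_subset_unitsIn _ le_sup_right) x.2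
  exact hx

end Wset

theorem stmt4 (d : ℕ) (hd : 4 ≤ d)
    (M : (↥(Wset d) →₀ ℤ) →+ ℤ × ℤ × ℤ × ℤ)
    (hM : ∀ v : ↥(Wset d) →₀ ℤ,
      M v = (v.sum fun _ n => n,
             v.sum fun x n => n * x.val.1,
             v.sum fun x n => n * x.val.2.1,
             v.sum fun x n => n * x.val.2.2)) :
    AddSubgroup.closure {v : ↥(Wset d) →₀ ℤ |
        ∃ a b c e : ↥(Wset d), a.val + b.val = c.val + e.val ∧
          v = Finsupp.single a 1 + Finsupp.single b 1
              - Finsupp.single c 1 - Finsupp.single e 1} = M.ker ∧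
    Nonempty (Module.Basis (Fin (Nat.card ↥(Wset d) - 4)) ℤ ↥M.ker) := by
  obtain rfl : M = moment Subtype.val :=
    addHom_ext fun x n => by ext <;> simp [hM, sum_single_index]
  have hsec := Wset.moment_frameSection (Nat.le_of_succ_le hd)
  have hker : (moment Subtype.val).ker = binomialLattice Subtype.val :=
    (moment _).ker_eq_of_sup_range_eq_top (Wset.frameSection (Nat.le_of_succ_le hd)) hsec
      (binomialLattice_le_ker_moment Subtype.val) (Wset.binomialLattice_sup_range_frameSection hd)
  refine ⟨hker.symm, ?_⟩
  have := (Wset.finite d).fintype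
  obtain ⟨b⟩ := (moment _).nonempty_basis_ker fun q => ⟨_, hsec q⟩
  exact ⟨b.reindex (finCongr (by simp))⟩
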